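/- Odd contact grading of G(3): write each root α ∈ Δ uniquely as α = m₁α₁ + m₂α₂ + m₃α₃ with integers mᵢ, where (α₁, α₂, α₃) = Π_I. Then every root has m₁ ∈ {−2, −1, 0, 1, 2}; the roots with m₁ = −1 are exactly the seven odd roots −δ and −δ ± εᵢ (i = 1,2,3); the unique root with m₁ = −2 is −2δ, which is even; and for every root α with m₁ = −1 the vector −2δ − α is again a root with m₁ = −1. (Thus the parabolic grading determined by crossing node 1 of diagram I has depth 2 with dim g₋₁ = (0|7) and dim g₋₂ = (1|0), the pairing into g₋₂ being nondegenerate on root vectors.) -/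
import Mathlib


variable {V : Type*} [AddCommGroup V] [Module ℚ V]

/-- The even roots of the exceptional Lie superalgebra `G(3)`. -/
def G3Δ0 (δ ε1 ε2 ε3 : V) : Set V :=
  {(2:ℚ) • δ, -((2:ℚ) • δ), ε1, ε2, ε3, -ε1, -ε2, -ε3,
   ε1 - ε2, ε2 - ε1, ε1 - ε3, ε3 - ε1, ε2 - ε3, ε3 - ε2}

/-- The odd roots of the exceptional Lie superalgebra `G(3)`. -/
def G3Δ1 (δ ε1 ε2 ε3 : V) : Set V :=
  {δ, -δ, δ + ε1, δ - ε1, -δ + ε1, -δ - ε1,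
   δ + ε2, δ - ε2, -δ + ε2, -δ - ε2,
   δ + ε3, δ - ε3, -δ + ε3, -δ - ε3}

set_option maxHeartbeats 1600000 in
theorem g3_odd_contact_grading (δ ε1 ε2 ε3 : V)
    (hli : LinearIndependent ℚ ![δ, ε1, ε2]) (hε3 : ε3 = -ε1 - ε2)
    (α1 α2 α3 : V) (h1 : α1 = δ - ε1 - ε2) (h2 : α2 = ε1) (h3 : α3 = ε2 - ε1) :
    (∀ α ∈ G3Δ0 δ ε1 ε2 ε3 ∪ G3Δ1 δ ε1 ε2 ε3, ∀ m : ℤ × ℤ × ℤ,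
      α = m.1 • α1 + m.2.1 • α2 + m.2.2 • α3 → m.1 ∈ ({-2, -1, 0, 1, 2} : Set ℤ)) ∧
    (∀ α ∈ G3Δ0 δ ε1 ε2 ε3 ∪ G3Δ1 δ ε1 ε2 ε3,
      ((∃ m : ℤ × ℤ × ℤ, α = m.1 • α1 + m.2.1 • α2 + m.2.2 • α3 ∧ m.1 = -1) ↔ α ∈ ({-δ, -δ + ε1, -δ - ε1, -δ + ε2, -δ - ε2, -δ + ε3, -δ - ε3} : Set V))) ∧
    ({-δ, -δ + ε1, -δ - ε1, -δ + ε2, -δ - ε2, -δ + ε3, -δ - ε3} : Set V) ⊆ G3Δ1 δ ε1 ε2 ε3 ∧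
    (∀ α ∈ G3Δ0 δ ε1 ε2 ε3 ∪ G3Δ1 δ ε1 ε2 ε3,
      ((∃ m : ℤ × ℤ × ℤ, α = m.1 • α1 + m.2.1 • α2 + m.2.2 • α3 ∧ m.1 = -2) ↔ α = -((2:ℚ) • δ))) ∧
    -((2:ℚ) • δ) ∈ G3Δ0 δ ε1 ε2 ε3 ∧
    (∀ α ∈ G3Δ0 δ ε1 ε2 ε3 ∪ G3Δ1 δ ε1 ε2 ε3, (∃ m : ℤ × ℤ × ℤ, α = m.1 • α1 + m.2.1 • α2 + m.2.2 • α3 ∧ m.1 = -1) →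
      -((2:ℚ) • δ) - α ∈ G3Δ0 δ ε1 ε2 ε3 ∪ G3Δ1 δ ε1 ε2 ε3 ∧
      (∃ m : ℤ × ℤ × ℤ, -((2:ℚ) • δ) - α = m.1 • α1 + m.2.1 • α2 + m.2.2 • α3 ∧ m.1 = -1)) := by
  subst hε3
  rw [h1, h2, h3]
  have key : ∀ a b c : ℚ, a•δ+b•ε1+c•ε2 = 0 → a = 0 ∧ b = 0 ∧ c = 0 := by
    intro a b c h
    have h2 := Fintype.linearIndependent_iff.mp hli ![a,b,c] (by simpa [Fin.sum_univ_three] using h)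
    exact ⟨h2 0, h2 1, h2 2⟩
  have uniq : ∀ a b c a' b' c' : ℤ, a•(δ-ε1-ε2)+b•ε1+c•(ε2-ε1) = a'•(δ-ε1-ε2)+b'•ε1+c'•(ε2-ε1) → a = a' := by
    intro a b c a' b' c' h
    have h0 : ((a:ℚ)-a')•δ + (((b:ℚ)-a-c)-((b':ℚ)-a'-c'))•ε1 + (((c:ℚ)-a)-((c':ℚ)-a'))•ε2 =
        (a•(δ-ε1-ε2)+b•ε1+c•(ε2-ε1)) - (a'•(δ-ε1-ε2)+b'•ε1+c'•(ε2-ε1)) := by module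
    rw [h, sub_self] at h0
    have h1 := (key _ _ _ h0).1
    have : (a:ℚ) = a' := by linarith
    exact_mod_cast this
  refine ⟨?_, ?_, ?_, ?_, ?_, ?_⟩
  · intro α hα m hm
    simp only [G3Δ0, G3Δ1, Set.mem_union, Set.mem_insert_iff, Set.mem_singleton_iff] at hα
    simp only [Set.mem_insert_iff, Set.mem_singleton_iff]
    rcases hα with ((rfl|rfl|rfl|rfl|rfl|rfl|rfl|rfl|rfl|rfl|rfl|rfl|rfl|rfl)|(rfl|rfl|rfl|rfl|rfl|rfl|rfl|rfl|rfl|rfl|rfl|rfl|rfl|rfl))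
    · have h := uniq m.1 m.2.1 m.2.2 (2) (4) (2) (hm.symm.trans (by module)); omega
    · have h := uniq m.1 m.2.1 m.2.2 (-2) (-4) (-2) (hm.symm.trans (by module)); omega
    · have h := uniq m.1 m.2.1 m.2.2 (0) (1) (0) (hm.symm.trans (by module)); omega
    · have h := uniq m.1 m.2.1 m.2.2 (0) (1) (1) (hm.symm.trans (by module)); omega
    · have h := uniq m.1 m.2.1 m.2.2 (0) (-2) (-1) (hm.symm.trans (by module)); omega
    · have h := uniq m.1 m.2.1 m.2.2 (0) (-1) (0) (hm.symm.trans (by module)); omega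
    · have h := uniq m.1 m.2.1 m.2.2 (0) (-1) (-1) (hm.symm.trans (by module)); omega
    · have h := uniq m.1 m.2.1 m.2.2 (0) (2) (1) (hm.symm.trans (by module)); omega
    · have h := uniq m.1 m.2.1 m.2.2 (0) (0) (-1) (hm.symm.trans (by module)); omega
    · have h := uniq m.1 m.2.1 m.2.2 (0) (0) (1) (hm.symm.trans (by module)); omega
    · have h := uniq m.1 m.2.1 m.2.2 (0) (3) (1) (hm.symm.trans (by module)); omega
    · have h := uniq m.1 m.2.1 m.2.2 (0) (-3) (-1) (hm.symm.trans (by module)); omega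
    · have h := uniq m.1 m.2.1 m.2.2 (0) (3) (2) (hm.symm.trans (by module)); omega
    · have h := uniq m.1 m.2.1 m.2.2 (0) (-3) (-2) (hm.symm.trans (by module)); omega
    · have h := uniq m.1 m.2.1 m.2.2 (1) (2) (1) (hm.symm.trans (by module)); omega
    · have h := uniq m.1 m.2.1 m.2.2 (-1) (-2) (-1) (hm.symm.trans (by module)); omega
    · have h := uniq m.1 m.2.1 m.2.2 (1) (3) (1) (hm.symm.trans (by module)); omega
    · have h := uniq m.1 m.2.1 m.2.2 (1) (1) (1) (hm.symm.trans (by module)); omega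
    · have h := uniq m.1 m.2.1 m.2.2 (-1) (-1) (-1) (hm.symm.trans (by module)); omega
    · have h := uniq m.1 m.2.1 m.2.2 (-1) (-3) (-1) (hm.symm.trans (by module)); omega
    · have h := uniq m.1 m.2.1 m.2.2 (1) (3) (2) (hm.symm.trans (by module)); omega
    · have h := uniq m.1 m.2.1 m.2.2 (1) (1) (0) (hm.symm.trans (by module)); omega
    · have h := uniq m.1 m.2.1 m.2.2 (-1) (-1) (0) (hm.symm.trans (by module)); omega
    · have h := uniq m.1 m.2.1 m.2.2 (-1) (-3) (-2) (hm.symm.trans (by module)); omega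
    · have h := uniq m.1 m.2.1 m.2.2 (1) (0) (0) (hm.symm.trans (by module)); omega
    · have h := uniq m.1 m.2.1 m.2.2 (1) (4) (2) (hm.symm.trans (by module)); omega
    · have h := uniq m.1 m.2.1 m.2.2 (-1) (-4) (-2) (hm.symm.trans (by module)); omega
    · have h := uniq m.1 m.2.1 m.2.2 (-1) (0) (0) (hm.symm.trans (by module)); omega
  · intro α hα
    simp only [G3Δ0, G3Δ1, Set.mem_union, Set.mem_insert_iff, Set.mem_singleton_iff] at hα
    constructor
    · rintro ⟨m, hm, hm1⟩
      simp only [Set.mem_insert_iff, Set.mem_singleton_iff]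
      rcases hα with ((rfl|rfl|rfl|rfl|rfl|rfl|rfl|rfl|rfl|rfl|rfl|rfl|rfl|rfl)|(rfl|rfl|rfl|rfl|rfl|rfl|rfl|rfl|rfl|rfl|rfl|rfl|rfl|rfl))
      · have h := uniq m.1 m.2.1 m.2.2 (2) (4) (2) (hm.symm.trans (by module)); first | omega | tauto
      · have h := uniq m.1 m.2.1 m.2.2 (-2) (-4) (-2) (hm.symm.trans (by module)); first | omega | tauto
      · have h := uniq m.1 m.2.1 m.2.2 (0) (1) (0) (hm.symm.trans (by module)); first | omega | tauto
      · have h := uniq m.1 m.2.1 m.2.2 (0) (1) (1) (hm.symm.trans (by module)); first | omega | tauto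
      · have h := uniq m.1 m.2.1 m.2.2 (0) (-2) (-1) (hm.symm.trans (by module)); first | omega | tauto
      · have h := uniq m.1 m.2.1 m.2.2 (0) (-1) (0) (hm.symm.trans (by module)); first | omega | tauto
      · have h := uniq m.1 m.2.1 m.2.2 (0) (-1) (-1) (hm.symm.trans (by module)); first | omega | tauto
      · have h := uniq m.1 m.2.1 m.2.2 (0) (2) (1) (hm.symm.trans (by module)); first | omega | tauto
      · have h := uniq m.1 m.2.1 m.2.2 (0) (0) (-1) (hm.symm.trans (by module)); first | omega | tauto
      · have h := uniq m.1 m.2.1 m.2.2 (0) (0) (1) (hm.symm.trans (by module)); first | omega | tauto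
      · have h := uniq m.1 m.2.1 m.2.2 (0) (3) (1) (hm.symm.trans (by module)); first | omega | tauto
      · have h := uniq m.1 m.2.1 m.2.2 (0) (-3) (-1) (hm.symm.trans (by module)); first | omega | tauto
      · have h := uniq m.1 m.2.1 m.2.2 (0) (3) (2) (hm.symm.trans (by module)); first | omega | tauto
      · have h := uniq m.1 m.2.1 m.2.2 (0) (-3) (-2) (hm.symm.trans (by module)); first | omega | tauto
      · have h := uniq m.1 m.2.1 m.2.2 (1) (2) (1) (hm.symm.trans (by module)); first | omega | tauto
      · have h := uniq m.1 m.2.1 m.2.2 (-1) (-2) (-1) (hm.symm.trans (by module)); first | omega | tauto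
      · have h := uniq m.1 m.2.1 m.2.2 (1) (3) (1) (hm.symm.trans (by module)); first | omega | tauto
      · have h := uniq m.1 m.2.1 m.2.2 (1) (1) (1) (hm.symm.trans (by module)); first | omega | tauto
      · have h := uniq m.1 m.2.1 m.2.2 (-1) (-1) (-1) (hm.symm.trans (by module)); first | omega | tauto
      · have h := uniq m.1 m.2.1 m.2.2 (-1) (-3) (-1) (hm.symm.trans (by module)); first | omega | tauto
      · have h := uniq m.1 m.2.1 m.2.2 (1) (3) (2) (hm.symm.trans (by module)); first | omega | tauto
      · have h := uniq m.1 m.2.1 m.2.2 (1) (1) (0) (hm.symm.trans (by module)); first | omega | tauto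
      · have h := uniq m.1 m.2.1 m.2.2 (-1) (-1) (0) (hm.symm.trans (by module)); first | omega | tauto
      · have h := uniq m.1 m.2.1 m.2.2 (-1) (-3) (-2) (hm.symm.trans (by module)); first | omega | tauto
      · have h := uniq m.1 m.2.1 m.2.2 (1) (0) (0) (hm.symm.trans (by module)); first | omega | tauto
      · have h := uniq m.1 m.2.1 m.2.2 (1) (4) (2) (hm.symm.trans (by module)); first | omega | tauto
      · have h := uniq m.1 m.2.1 m.2.2 (-1) (-4) (-2) (hm.symm.trans (by module)); first | omega | tauto
      · have h := uniq m.1 m.2.1 m.2.2 (-1) (0) (0) (hm.symm.trans (by module)); first | omega | tauto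
    · intro hmem
      simp only [Set.mem_insert_iff, Set.mem_singleton_iff] at hmem
      rcases hmem with rfl|rfl|rfl|rfl|rfl|rfl|rfl
      · exact ⟨(-1,-2,-1), by module, rfl⟩
      · exact ⟨(-1,-1,-1), by module, rfl⟩
      · exact ⟨(-1,-3,-1), by module, rfl⟩
      · exact ⟨(-1,-1,0), by module, rfl⟩
      · exact ⟨(-1,-3,-2), by module, rfl⟩
      · exact ⟨(-1,-4,-2), by module, rfl⟩
      · exact ⟨(-1,0,0), by module, rfl⟩
  · intro x hx
    simp only [Set.mem_insert_iff, Set.mem_singleton_iff] at hx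
    simp only [G3Δ1, Set.mem_insert_iff, Set.mem_singleton_iff]
    tauto
  · intro α hα
    simp only [G3Δ0, G3Δ1, Set.mem_union, Set.mem_insert_iff, Set.mem_singleton_iff] at hα
    constructor
    · rintro ⟨m, hm, hm1⟩
      rcases hα with ((rfl|rfl|rfl|rfl|rfl|rfl|rfl|rfl|rfl|rfl|rfl|rfl|rfl|rfl)|(rfl|rfl|rfl|rfl|rfl|rfl|rfl|rfl|rfl|rfl|rfl|rfl|rfl|rfl))
      · have h := uniq m.1 m.2.1 m.2.2 (2) (4) (2) (hm.symm.trans (by module)); first | omega | rfl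
      · have h := uniq m.1 m.2.1 m.2.2 (-2) (-4) (-2) (hm.symm.trans (by module)); first | omega | rfl
      · have h := uniq m.1 m.2.1 m.2.2 (0) (1) (0) (hm.symm.trans (by module)); first | omega | rfl
      · have h := uniq m.1 m.2.1 m.2.2 (0) (1) (1) (hm.symm.trans (by module)); first | omega | rfl
      · have h := uniq m.1 m.2.1 m.2.2 (0) (-2) (-1) (hm.symm.trans (by module)); first | omega | rfl
      · have h := uniq m.1 m.2.1 m.2.2 (0) (-1) (0) (hm.symm.trans (by module)); first | omega | rfl
      · have h := uniq m.1 m.2.1 m.2.2 (0) (-1) (-1) (hm.symm.trans (by module)); first | omega | rfl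
      · have h := uniq m.1 m.2.1 m.2.2 (0) (2) (1) (hm.symm.trans (by module)); first | omega | rfl
      · have h := uniq m.1 m.2.1 m.2.2 (0) (0) (-1) (hm.symm.trans (by module)); first | omega | rfl
      · have h := uniq m.1 m.2.1 m.2.2 (0) (0) (1) (hm.symm.trans (by module)); first | omega | rfl
      · have h := uniq m.1 m.2.1 m.2.2 (0) (3) (1) (hm.symm.trans (by module)); first | omega | rfl
      · have h := uniq m.1 m.2.1 m.2.2 (0) (-3) (-1) (hm.symm.trans (by module)); first | omega | rfl
      · have h := uniq m.1 m.2.1 m.2.2 (0) (3) (2) (hm.symm.trans (by module)); first | omega | rfl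
      · have h := uniq m.1 m.2.1 m.2.2 (0) (-3) (-2) (hm.symm.trans (by module)); first | omega | rfl
      · have h := uniq m.1 m.2.1 m.2.2 (1) (2) (1) (hm.symm.trans (by module)); first | omega | rfl
      · have h := uniq m.1 m.2.1 m.2.2 (-1) (-2) (-1) (hm.symm.trans (by module)); first | omega | rfl
      · have h := uniq m.1 m.2.1 m.2.2 (1) (3) (1) (hm.symm.trans (by module)); first | omega | rfl
      · have h := uniq m.1 m.2.1 m.2.2 (1) (1) (1) (hm.symm.trans (by module)); first | omega | rfl
      · have h := uniq m.1 m.2.1 m.2.2 (-1) (-1) (-1) (hm.symm.trans (by module)); first | omega | rfl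
      · have h := uniq m.1 m.2.1 m.2.2 (-1) (-3) (-1) (hm.symm.trans (by module)); first | omega | rfl
      · have h := uniq m.1 m.2.1 m.2.2 (1) (3) (2) (hm.symm.trans (by module)); first | omega | rfl
      · have h := uniq m.1 m.2.1 m.2.2 (1) (1) (0) (hm.symm.trans (by module)); first | omega | rfl
      · have h := uniq m.1 m.2.1 m.2.2 (-1) (-1) (0) (hm.symm.trans (by module)); first | omega | rfl
      · have h := uniq m.1 m.2.1 m.2.2 (-1) (-3) (-2) (hm.symm.trans (by module)); first | omega | rfl
      · have h := uniq m.1 m.2.1 m.2.2 (1) (0) (0) (hm.symm.trans (by module)); first | omega | rfl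
      · have h := uniq m.1 m.2.1 m.2.2 (1) (4) (2) (hm.symm.trans (by module)); first | omega | rfl
      · have h := uniq m.1 m.2.1 m.2.2 (-1) (-4) (-2) (hm.symm.trans (by module)); first | omega | rfl
      · have h := uniq m.1 m.2.1 m.2.2 (-1) (0) (0) (hm.symm.trans (by module)); first | omega | rfl
    · rintro rfl
      exact ⟨(-2,-4,-2), by module, rfl⟩
  · simp only [G3Δ0, Set.mem_insert_iff, Set.mem_singleton_iff]; tauto
  · intro α hα hex
    obtain ⟨m, hm, hm1⟩ := hex
    simp only [G3Δ0, G3Δ1, Set.mem_union, Set.mem_insert_iff, Set.mem_singleton_iff] at hα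
    rcases hα with ((rfl|rfl|rfl|rfl|rfl|rfl|rfl|rfl|rfl|rfl|rfl|rfl|rfl|rfl)|(rfl|rfl|rfl|rfl|rfl|rfl|rfl|rfl|rfl|rfl|rfl|rfl|rfl|rfl))
    · have h := uniq m.1 m.2.1 m.2.2 (2) (4) (2) (hm.symm.trans (by module)); exfalso; omega
    · have h := uniq m.1 m.2.1 m.2.2 (-2) (-4) (-2) (hm.symm.trans (by module)); exfalso; omega
    · have h := uniq m.1 m.2.1 m.2.2 (0) (1) (0) (hm.symm.trans (by module)); exfalso; omega
    · have h := uniq m.1 m.2.1 m.2.2 (0) (1) (1) (hm.symm.trans (by module)); exfalso; omega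
    · have h := uniq m.1 m.2.1 m.2.2 (0) (-2) (-1) (hm.symm.trans (by module)); exfalso; omega
    · have h := uniq m.1 m.2.1 m.2.2 (0) (-1) (0) (hm.symm.trans (by module)); exfalso; omega
    · have h := uniq m.1 m.2.1 m.2.2 (0) (-1) (-1) (hm.symm.trans (by module)); exfalso; omega
    · have h := uniq m.1 m.2.1 m.2.2 (0) (2) (1) (hm.symm.trans (by module)); exfalso; omega
    · have h := uniq m.1 m.2.1 m.2.2 (0) (0) (-1) (hm.symm.trans (by module)); exfalso; omega
    · have h := uniq m.1 m.2.1 m.2.2 (0) (0) (1) (hm.symm.trans (by module)); exfalso; omega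
    · have h := uniq m.1 m.2.1 m.2.2 (0) (3) (1) (hm.symm.trans (by module)); exfalso; omega
    · have h := uniq m.1 m.2.1 m.2.2 (0) (-3) (-1) (hm.symm.trans (by module)); exfalso; omega
    · have h := uniq m.1 m.2.1 m.2.2 (0) (3) (2) (hm.symm.trans (by module)); exfalso; omega
    · have h := uniq m.1 m.2.1 m.2.2 (0) (-3) (-2) (hm.symm.trans (by module)); exfalso; omega
    · have h := uniq m.1 m.2.1 m.2.2 (1) (2) (1) (hm.symm.trans (by module)); exfalso; omega
    · have e : -((2:ℚ) • δ) - (-δ) = -δ := by module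
      rw [e]
      exact ⟨Or.inr (by simp only [G3Δ1, Set.mem_insert_iff, Set.mem_singleton_iff]; tauto), (-1,-2,-1), by module, rfl⟩
    · have h := uniq m.1 m.2.1 m.2.2 (1) (3) (1) (hm.symm.trans (by module)); exfalso; omega
    · have h := uniq m.1 m.2.1 m.2.2 (1) (1) (1) (hm.symm.trans (by module)); exfalso; omega
    · have e : -((2:ℚ) • δ) - (-δ + ε1) = -δ - ε1 := by module
      rw [e]
      exact ⟨Or.inr (by simp only [G3Δ1, Set.mem_insert_iff, Set.mem_singleton_iff]; tauto), (-1,-3,-1), by module, rfl⟩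
    · have e : -((2:ℚ) • δ) - (-δ - ε1) = -δ + ε1 := by module
      rw [e]
      exact ⟨Or.inr (by simp only [G3Δ1, Set.mem_insert_iff, Set.mem_singleton_iff]; tauto), (-1,-1,-1), by module, rfl⟩
    · have h := uniq m.1 m.2.1 m.2.2 (1) (3) (2) (hm.symm.trans (by module)); exfalso; omega
    · have h := uniq m.1 m.2.1 m.2.2 (1) (1) (0) (hm.symm.trans (by module)); exfalso; omega
    · have e : -((2:ℚ) • δ) - (-δ + ε2) = -δ - ε2 := by module
      rw [e]
      exact ⟨Or.inr (by simp only [G3Δ1, Set.mem_insert_iff, Set.mem_singleton_iff]; tauto), (-1,-3,-2), by module, rfl⟩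
    · have e : -((2:ℚ) • δ) - (-δ - ε2) = -δ + ε2 := by module
      rw [e]
      exact ⟨Or.inr (by simp only [G3Δ1, Set.mem_insert_iff, Set.mem_singleton_iff]; tauto), (-1,-1,0), by module, rfl⟩
    · have h := uniq m.1 m.2.1 m.2.2 (1) (0) (0) (hm.symm.trans (by module)); exfalso; omega
    · have h := uniq m.1 m.2.1 m.2.2 (1) (4) (2) (hm.symm.trans (by module)); exfalso; omega
    · have e : -((2:ℚ) • δ) - (-δ + (-ε1 - ε2)) = -δ - (-ε1 - ε2) := by module
      rw [e]
      exact ⟨Or.inr (by simp only [G3Δ1, Set.mem_insert_iff, Set.mem_singleton_iff]; tauto), (-1,0,0), by module, rfl⟩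
    · have e : -((2:ℚ) • δ) - (-δ - (-ε1 - ε2)) = -δ + (-ε1 - ε2) := by module
      rw [e]
      exact ⟨Or.inr (by simp only [G3Δ1, Set.mem_insert_iff, Set.mem_singleton_iff]; tauto), (-1,-4,-2), by module, rfl⟩
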